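/- Suppose an irrational α satisfies: there exists k ≥ 0 with ã_k = 1 and e^{ã_i} ≤ ã_{i+1} ≤ e^{2ã_i} − 1 for all i ≥ k, where ã_i are the standard continued fraction partial quotients of α. Then the standard Brjuno sum B̃(α) = Σ_{i=−1}^{∞} β̃_i·log(1/α̃_{i+1}) is finite; in fact B̃(α) ≤ Σ_{i=−1}^{k−1} β̃_i·log(1/α̃_{i+1}) + 8. -/

import Mathlib

/-- The standard continued fraction entries `α̃_n`. -/
noncomputable def scf (α : ℝ) : ℕ → ℝ
  | 0 => Int.fract α
  | n + 1 => Int.fract (1 / scf α n)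

/-- The standard continued fraction partial quotients `ã_n = ⌊1/α̃_n⌋`. -/
noncomputable def spq (α : ℝ) (n : ℕ) : ℤ := ⌊1 / scf α n⌋

/-- `sbeta α n = β̃_{n-1} = ∏_{i=0}^{n-1} α̃_i`, with `sbeta α 0 = 1`. -/
noncomputable def sbeta (α : ℝ) (n : ℕ) : ℝ := ∏ i ∈ Finset.range n, scf α i

/-- The standard Brjuno function `B̃(α) = ∑_{n≥0} β̃_{n-1} log(1/α̃_n)`. -/
noncomputable def sbrjuno (α : ℝ) : ENNReal :=
  ∑' n : ℕ, ENNReal.ofReal (sbeta α n * Real.log (1 / scf α n))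

lemma scf_irr {α : ℝ} (hα : Irrational α) : ∀ n, Irrational (scf α n)
  | 0 => by
    rw [show scf α 0 = Int.fract α from rfl, ← Int.self_sub_floor]
    exact hα.sub_intCast _
  | n + 1 => by
    have h := scf_irr hα n
    have h1 : Irrational (1 / scf α n) := by simpa [one_div] using h.inv
    rw [show scf α (n + 1) = Int.fract (1 / scf α n) from rfl, ← Int.self_sub_floor]
    exact h1.sub_intCast _

lemma scf_pos {α : ℝ} (hα : Irrational α) (n : ℕ) : 0 < scf α n := by
  have h := (scf_irr hα n).ne_zero
  have : 0 ≤ scf α n := by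
    cases n with
    | zero => exact Int.fract_nonneg _
    | succ m => exact Int.fract_nonneg _
  exact lt_of_le_of_ne this (Ne.symm h)

lemma scf_lt_one {α : ℝ} (n : ℕ) : scf α n < 1 := by
  cases n with
  | zero => exact Int.fract_lt_one _
  | succ m => exact Int.fract_lt_one _

lemma one_lt_inv_scf {α : ℝ} (hα : Irrational α) (n : ℕ) : 1 < 1 / scf α n :=
  (one_lt_div (scf_pos hα n)).2 (scf_lt_one n)

lemma spq_pos {α : ℝ} (hα : Irrational α) (n : ℕ) : 1 ≤ spq α n := by
  have := one_lt_inv_scf hα n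
  exact Int.le_floor.2 (by exact_mod_cast this.le)

lemma spq_le {α : ℝ} (n : ℕ) : (spq α n : ℝ) ≤ 1 / scf α n := Int.floor_le _

lemma lt_spq_add_one {α : ℝ} (n : ℕ) : 1 / scf α n < (spq α n : ℝ) + 1 :=
  Int.lt_floor_add_one _

lemma scf_succ_eq {α : ℝ} (n : ℕ) : scf α (n + 1) = 1 / scf α n - (spq α n : ℝ) := by
  rw [show scf α (n + 1) = Int.fract (1 / scf α n) from rfl, ← Int.self_sub_floor, spq]

/-- Product of two consecutive entries is at most 1/2. -/
lemma scf_mul_scf_le {α : ℝ} (hα : Irrational α) (n : ℕ) :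
    scf α n * scf α (n + 1) ≤ 1 / 2 := by
  have hp := scf_pos hα n
  have ha := spq_pos hα n
  have ha' : (1 : ℝ) ≤ (spq α n : ℝ) := by exact_mod_cast ha
  have h1 : scf α n * scf α (n + 1) = 1 - (spq α n : ℝ) * scf α n := by
    rw [scf_succ_eq]; field_simp
  have h2 : 1 < ((spq α n : ℝ) + 1) * scf α n := by
    have h := lt_spq_add_one (α := α) n
    rwa [div_lt_iff₀ hp] at h
  have hge : 0 ≤ ((spq α n : ℝ) - 1) * scf α n := mul_nonneg (by linarith) hp.le
  rw [h1]
  nlinarith [h2, hge]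

lemma sbeta_pos {α : ℝ} (hα : Irrational α) (n : ℕ) : 0 < sbeta α n :=
  Finset.prod_pos fun i _ => scf_pos hα i

lemma sbeta_le_one {α : ℝ} (hα : Irrational α) (n : ℕ) : sbeta α n ≤ 1 :=
  Finset.prod_le_one (fun i _ => (scf_pos hα i).le) (fun i _ => (scf_lt_one i).le)

lemma sbeta_succ {α : ℝ} (n : ℕ) : sbeta α (n + 1) = sbeta α n * scf α n :=
  Finset.prod_range_succ _ _

lemma sbeta_add_two_le {α : ℝ} (hα : Irrational α) (n : ℕ) :
    sbeta α (n + 2) ≤ sbeta α n * (1 / 2) := by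
  have : sbeta α (n + 2) = sbeta α n * (scf α n * scf α (n + 1)) := by
    rw [show n + 2 = (n + 1) + 1 from rfl, sbeta_succ, sbeta_succ]; ring
  rw [this]
  exact mul_le_mul_of_nonneg_left (scf_mul_scf_le hα n) (sbeta_pos hα n).le

lemma sbeta_geom {α : ℝ} (hα : Irrational α) (k : ℕ) : ∀ m : ℕ,
    sbeta α (k + 2 * m) ≤ (1 / 2 : ℝ) ^ m ∧ sbeta α (k + 2 * m + 1) ≤ (1 / 2 : ℝ) ^ m := by
  intro m
  induction m with
  | zero => simpa using ⟨sbeta_le_one hα _, sbeta_le_one hα _⟩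
  | succ m ih =>
    constructor
    · have h := sbeta_add_two_le hα (k + 2 * m)
      have : k + 2 * (m + 1) = k + 2 * m + 2 := by ring
      rw [this]
      calc sbeta α (k + 2 * m + 2) ≤ sbeta α (k + 2 * m) * (1 / 2) := h
        _ ≤ (1 / 2 : ℝ) ^ m * (1 / 2) := by
            exact mul_le_mul_of_nonneg_right ih.1 (by norm_num)
        _ = (1 / 2 : ℝ) ^ (m + 1) := by ring
    · have h := sbeta_add_two_le hα (k + 2 * m + 1)
      have : k + 2 * (m + 1) + 1 = k + 2 * m + 1 + 2 := by ring
      rw [this]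
      calc sbeta α (k + 2 * m + 1 + 2) ≤ sbeta α (k + 2 * m + 1) * (1 / 2) := h
        _ ≤ (1 / 2 : ℝ) ^ m * (1 / 2) := by
            exact mul_le_mul_of_nonneg_right ih.2 (by norm_num)
        _ = (1 / 2 : ℝ) ^ (m + 1) := by ring

theorem stmt_18 (α : ℝ) (hα : Irrational α) (k : ℕ) (hk : spq α k = 1)
    (hgrow : ∀ i : ℕ, k ≤ i →
      Real.exp ((spq α i : ℝ)) ≤ ((spq α (i + 1) : ℤ) : ℝ) ∧
      ((spq α (i + 1) : ℤ) : ℝ) ≤ Real.exp (2 * ((spq α i : ℤ) : ℝ)) - 1) :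
    sbrjuno α ≠ ⊤ ∧
    sbrjuno α ≤
      ENNReal.ofReal ((∑ m ∈ Finset.range (k + 1), sbeta α m * Real.log (1 / scf α m)) + 8) := by
  set f : ℕ → ENNReal := fun n => ENNReal.ofReal (sbeta α n * Real.log (1 / scf α n)) with hf
  -- log (1/scf) is nonneg
  have hlognn : ∀ n, 0 ≤ Real.log (1 / scf α n) := fun n =>
    Real.log_nonneg (one_lt_inv_scf hα n).le
  -- key term bound: for i ≥ k, f (i+1) ≤ ofReal (2 * sbeta α i)
  have hterm : ∀ i : ℕ, k ≤ i → f (i + 1) ≤ ENNReal.ofReal (2 * sbeta α i) := by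
    intro i hi
    apply ENNReal.ofReal_le_ofReal
    have hg := (hgrow i hi).2
    have hbp := sbeta_pos hα (i + 1)
    have hap := spq_pos hα (i + 1)
    have hap' : (1 : ℝ) ≤ (spq α (i + 1) : ℝ) := by exact_mod_cast hap
    have hinvpos : 0 < 1 / scf α (i + 1) := one_div_pos.2 (scf_pos hα _)
    have h1 : Real.log (1 / scf α (i + 1)) ≤ Real.log ((spq α (i + 1) : ℝ) + 1) :=
      Real.log_le_log hinvpos (lt_spq_add_one _).le
    have h2 : Real.log ((spq α (i + 1) : ℝ) + 1) ≤ 2 * (spq α i : ℝ) := by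
      have hpos : (0 : ℝ) < (spq α (i + 1) : ℝ) + 1 := by linarith
      rw [Real.log_le_iff_le_exp hpos]
      linarith
    have h3 : scf α i * (spq α i : ℝ) ≤ 1 := by
      have := spq_le (α := α) i
      have hp := scf_pos hα i
      calc scf α i * (spq α i : ℝ) ≤ scf α i * (1 / scf α i) :=
            mul_le_mul_of_nonneg_left this hp.le
        _ = 1 := by field_simp
    calc sbeta α (i + 1) * Real.log (1 / scf α (i + 1))
        ≤ sbeta α (i + 1) * (2 * (spq α i : ℝ)) :=
          mul_le_mul_of_nonneg_left (h1.trans h2) hbp.le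
      _ = 2 * (sbeta α i * (scf α i * (spq α i : ℝ))) := by rw [sbeta_succ]; ring
      _ ≤ 2 * (sbeta α i * 1) := by
          have := sbeta_pos hα i
          nlinarith
      _ = 2 * sbeta α i := by ring
  -- tail bound
  have htail : ∑' j : ℕ, f (j + (k + 1)) ≤ 8 := by
    have hle : ∀ j : ℕ, f (j + (k + 1)) ≤ ENNReal.ofReal (2 * sbeta α (k + j)) := by
      intro j
      have : j + (k + 1) = (k + j) + 1 := by ring
      rw [this]
      exact hterm (k + j) (Nat.le_add_right _ _)
    calc ∑' j : ℕ, f (j + (k + 1)) ≤ ∑' j : ℕ, ENNReal.ofReal (2 * sbeta α (k + j)) :=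
          ENNReal.tsum_le_tsum hle
      _ ≤ 8 := by
          rw [← tsum_even_add_odd ENNReal.summable ENNReal.summable]
          have he : ∑' m : ℕ, ENNReal.ofReal (2 * sbeta α (k + 2 * m)) ≤ 4 := by
            calc ∑' m : ℕ, ENNReal.ofReal (2 * sbeta α (k + 2 * m))
                ≤ ∑' m : ℕ, ENNReal.ofReal (2 * (1 / 2 : ℝ) ^ m) := by
                  refine ENNReal.tsum_le_tsum fun m => ENNReal.ofReal_le_ofReal ?_
                  have := (sbeta_geom hα k m).1
                  linarith
              _ = 4 := by
                  have : ∀ m : ℕ, ENNReal.ofReal (2 * (1 / 2 : ℝ) ^ m)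
                      = ENNReal.ofReal 2 * ENNReal.ofReal (1 / 2) ^ m := by
                    intro m
                    rw [ENNReal.ofReal_mul (by norm_num), ENNReal.ofReal_pow (by norm_num)]
                  simp_rw [this]
                  rw [ENNReal.tsum_mul_left, ENNReal.tsum_geometric]
                  have h12 : ENNReal.ofReal (1 / 2 : ℝ) = 2⁻¹ := by
                    rw [ENNReal.ofReal_div_of_pos (by norm_num)]
                    norm_num
                  rw [h12]
                  have : (1 : ENNReal) - 2⁻¹ = 2⁻¹ := by
                    rw [ENNReal.sub_eq_of_eq_add (by simp)]
                    exact (ENNReal.inv_two_add_inv_two).symm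
                  rw [this]
                  norm_num
          have ho : ∑' m : ℕ, ENNReal.ofReal (2 * sbeta α (k + (2 * m + 1))) ≤ 4 := by
            calc ∑' m : ℕ, ENNReal.ofReal (2 * sbeta α (k + (2 * m + 1)))
                ≤ ∑' m : ℕ, ENNReal.ofReal (2 * (1 / 2 : ℝ) ^ m) := by
                  refine ENNReal.tsum_le_tsum fun m => ENNReal.ofReal_le_ofReal ?_
                  have := (sbeta_geom hα k m).2
                  have he : k + (2 * m + 1) = k + 2 * m + 1 := by ring
                  rw [he]
                  linarith
              _ = 4 := by
                  have : ∀ m : ℕ, ENNReal.ofReal (2 * (1 / 2 : ℝ) ^ m)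
                      = ENNReal.ofReal 2 * ENNReal.ofReal (1 / 2) ^ m := by
                    intro m
                    rw [ENNReal.ofReal_mul (by norm_num), ENNReal.ofReal_pow (by norm_num)]
                  simp_rw [this]
                  rw [ENNReal.tsum_mul_left, ENNReal.tsum_geometric]
                  have h12 : ENNReal.ofReal (1 / 2 : ℝ) = 2⁻¹ := by
                    rw [ENNReal.ofReal_div_of_pos (by norm_num)]
                    norm_num
                  rw [h12]
                  have : (1 : ENNReal) - 2⁻¹ = 2⁻¹ := by
                    rw [ENNReal.sub_eq_of_eq_add (by simp)]
                    exact (ENNReal.inv_two_add_inv_two).symm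
                  rw [this]
                  norm_num
          calc (∑' m : ℕ, ENNReal.ofReal (2 * sbeta α (k + 2 * m)))
                + ∑' m : ℕ, ENNReal.ofReal (2 * sbeta α (k + (2 * m + 1)))
              ≤ 4 + 4 := add_le_add he ho
            _ = 8 := by norm_num
  -- split the sum
  have hsplit : sbrjuno α = (∑ m ∈ Finset.range (k + 1), f m) + ∑' j : ℕ, f (j + (k + 1)) := by
    rw [sbrjuno, ← Summable.sum_add_tsum_nat_add' (f := f) (k := k + 1) ENNReal.summable]
  have hfin : (∑ m ∈ Finset.range (k + 1), f m)
      = ENNReal.ofReal (∑ m ∈ Finset.range (k + 1), sbeta α m * Real.log (1 / scf α m)) := by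
    rw [ENNReal.ofReal_sum_of_nonneg]
    intro i _
    exact mul_nonneg (sbeta_pos hα i).le (hlognn i)
  have hbound : sbrjuno α ≤
      ENNReal.ofReal ((∑ m ∈ Finset.range (k + 1), sbeta α m * Real.log (1 / scf α m)) + 8) := by
    rw [hsplit, hfin]
    have hSnn : 0 ≤ ∑ m ∈ Finset.range (k + 1), sbeta α m * Real.log (1 / scf α m) :=
      Finset.sum_nonneg fun i _ => mul_nonneg (sbeta_pos hα i).le (hlognn i)
    rw [ENNReal.ofReal_add hSnn (by norm_num)]
    have h8 : ENNReal.ofReal (8 : ℝ) = 8 := by norm_num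
    rw [h8]
    exact add_le_add_right htail _
  exact ⟨ne_top_of_le_ne_top (by simp) hbound, hbound⟩
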